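/- Let σ² > 0 and define Λ(ν) = (σ²/2) ∫∫_{[0,T]²} min(s,t) ν(ds) ν(dt) for signed measures ν on [0,T]. Then for every φ ∈ C²([0,T]) with φ(0) = 0, the Fenchel–Legendre transform Λ*(φ) = sup_ν { ∫ φ dν - Λ(ν) } equals (1/(2σ²)) ∫₀ᵀ |φ'(t)|² dt, with the supremum attained at ν(dt) = -(φ''(t)/σ²) dt + (φ'(T)/σ²) δ_T(dt). -/

import Mathlib

/-!
For `ν = μ₁ - μ₂` supported on `[0, T]` put `g(u) = μ₁([u, ∞)) - μ₂([u, ∞))`. Writing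
`φ(t) = ∫₀ᵗ φ'` and `min(s, t) = ∫₀ᵀ 1{u ≤ s} 1{u ≤ t} du` and applying Fubini gives
`ν(φ) = ∫₀ᵀ g φ'` and `∫∫ min(s, t) ν(ds) ν(dt) = ∫₀ᵀ g²`, so
`ν(φ) - Λ(ν) = ∫₀ᵀ (g φ' - σ²/2 g²) ≤ (1/(2σ²)) ∫₀ᵀ φ'²` by completing the square pointwise.
Equality holds when `g = φ'/σ²`, and by the fundamental theorem of calculus this is the tail of
`-(φ''/σ²) dt + (φ'(T)/σ²) δ_T`.
-/

open MeasureTheory Set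

theorem antitone_measureReal_Ici (μ : Measure ℝ) [IsFiniteMeasure μ] :
    Antitone fun u => μ.real (Ici u) :=
  fun _ _ h => measureReal_mono (Ici_subset_Ici.2 h)

theorem MeasureTheory.IntegrableOn.measureReal_Ici_mul {μ : Measure ℝ} [IsFiniteMeasure μ]
    {f : ℝ → ℝ} {s : Set ℝ} (hf : IntegrableOn f s) :
    IntegrableOn (fun u => μ.real (Ici u) * f u) s :=
  hf.bdd_mul (antitone_measureReal_Ici μ).measurable.aestronglyMeasurable
    (c := μ.real univ) (ae_of_all _ fun u => by
      rw [Real.norm_of_nonneg measureReal_nonneg]; exact measureReal_mono (subset_univ _))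

theorem integrableOn_measureReal_Ici_Icc (μ : Measure ℝ) [IsFiniteMeasure μ] (a b : ℝ) :
    IntegrableOn (fun u => μ.real (Ici u)) (Icc a b) :=
  (antitone_measureReal_Ici μ).locallyIntegrable.integrableOn_isCompact isCompact_Icc

theorem integral_integral_indicator_eq_integral_measureReal_mul {α β : Type*}
    [MeasurableSpace α] [MeasurableSpace β] {ρ : Measure α} [IsFiniteMeasure ρ]
    {ν : Measure β} [SFinite ν] {A : α → Set β} (hA : MeasurableSet {p : α × β | p.2 ∈ A p.1})
    {f : β → ℝ} (hf : Integrable f ν) :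
    ∫ x, ∫ u, (A x).indicator f u ∂ν ∂ρ = ∫ u, ρ.real {x | u ∈ A x} * f u ∂ν := by
  rw [integral_integral_swap (f := fun x u => (A x).indicator f u)
    ((hf.comp_snd ρ).indicator hA)]
  congr 1 with u
  exact integral_indicator_const (μ := ρ) (f u) (measurable_prodMk_right hA)

theorem setIntegral_Icc_indicator_Iic {T t : ℝ} (ht : t ∈ Icc 0 T) (f : ℝ → ℝ) :
    ∫ u in Icc 0 T, (Iic t).indicator f u = ∫ u in 0..t, f u := by
  rw [setIntegral_indicator measurableSet_Iic, intervalIntegral.integral_of_le ht.1,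
    ← integral_Icc_eq_integral_Ioc]
  congr 2
  ext u
  simp only [mem_inter_iff, mem_Icc, mem_Iic]
  constructor
  · rintro ⟨⟨h0, -⟩, hu⟩; exact ⟨h0, hu⟩
  · rintro ⟨h0, hu⟩; exact ⟨⟨h0, hu.trans ht.2⟩, hu⟩

theorem integral_eq_setIntegral_measureReal_Ici_mul_deriv {T : ℝ} {φ : ℝ → ℝ}
    (hφ : ContDiff ℝ 1 φ) (hφ0 : φ 0 = 0) {μ : Measure ℝ} [IsFiniteMeasure μ]
    (hμ : μ (Icc 0 T)ᶜ = 0) :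
    ∫ t, φ t ∂μ = ∫ u in Icc 0 T, μ.real (Ici u) * deriv φ u := by
  have hd : Continuous (deriv φ) := hφ.continuous_deriv le_rfl
  have hFTC : ∀ t ∈ Icc 0 T, φ t = ∫ u in Icc 0 T, (Iic t).indicator (deriv φ) u := by
    intro t ht
    rw [setIntegral_Icc_indicator_Iic ht, intervalIntegral.integral_deriv_eq_sub' φ rfl
      (fun x _ => (hφ.differentiable one_ne_zero).differentiableAt) hd.continuousOn, hφ0, sub_zero]
  rw [integral_congr_ae (Filter.eventually_of_mem (mem_ae_iff.2 hμ) hFTC)]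
  exact integral_integral_indicator_eq_integral_measureReal_mul (ρ := μ) (A := Iic)
    (measurableSet_le measurable_snd measurable_fst) hd.integrableOn_Icc

theorem integral_min_prod_eq_setIntegral_measureReal_Ici_mul {T : ℝ} {μ ν : Measure ℝ}
    [IsFiniteMeasure μ] [IsFiniteMeasure ν] (hμ : μ (Icc 0 T)ᶜ = 0) (hν : ν (Icc 0 T)ᶜ = 0) :
    ∫ p : ℝ × ℝ, min p.1 p.2 ∂(μ.prod ν) = ∫ u in Icc 0 T, μ.real (Ici u) * ν.real (Ici u) := by
  have hmin : ∀ᵐ p ∂(μ.prod ν),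
      min p.1 p.2 = ∫ u in Icc 0 T, (Iic (min p.1 p.2)).indicator (fun _ => (1 : ℝ)) u := by
    have hμ' : ∀ᵐ t ∂μ, t ∈ Icc 0 T := mem_ae_iff.2 hμ
    have hν' : ∀ᵐ t ∂ν, t ∈ Icc 0 T := mem_ae_iff.2 hν
    filter_upwards [Measure.quasiMeasurePreserving_fst.ae hμ',
      Measure.quasiMeasurePreserving_snd.ae hν'] with p h₁ h₂
    rw [setIntegral_Icc_indicator_Iic ⟨le_min h₁.1 h₂.1, (min_le_left _ _).trans h₁.2⟩]
    simp
  rw [integral_congr_ae hmin, integral_integral_indicator_eq_integral_measureReal_mul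
    (ρ := μ.prod ν) (A := fun p => Iic (min p.1 p.2))
    (measurableSet_le measurable_snd (by fun_prop)) continuous_const.integrableOn_Icc]
  congr 1 with u
  have hsection : {p : ℝ × ℝ | u ∈ Iic (min p.1 p.2)} = Ici u ×ˢ Ici u := by
    ext p; simp only [mem_Iic, le_min_iff, mem_ofPred_eq, mem_prod, mem_Ici]
  rw [hsection, measureReal_prod_prod, mul_one]

noncomputable def signedTail (μ₁ μ₂ : Measure ℝ) (u : ℝ) : ℝ := μ₁.real (Ici u) - μ₂.real (Ici u)

theorem MeasureTheory.IntegrableOn.signedTail_mul {μ₁ μ₂ : Measure ℝ} [IsFiniteMeasure μ₁]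
    [IsFiniteMeasure μ₂] {f : ℝ → ℝ} {s : Set ℝ} (hf : IntegrableOn f s) :
    IntegrableOn (fun u => signedTail μ₁ μ₂ u * f u) s := by
  simpa only [signedTail, sub_mul, Pi.sub_def] using
    hf.measureReal_Ici_mul.sub hf.measureReal_Ici_mul

theorem integrableOn_signedTail_sq (μ₁ μ₂ : Measure ℝ) [IsFiniteMeasure μ₁]
    [IsFiniteMeasure μ₂] (a b : ℝ) :
    IntegrableOn (fun u => signedTail μ₁ μ₂ u ^ 2) (Icc a b) := by
  have hg : IntegrableOn (signedTail μ₁ μ₂) (Icc a b) :=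
    (integrableOn_measureReal_Ici_Icc μ₁ a b).sub (integrableOn_measureReal_Ici_Icc μ₂ a b)
  simpa only [sq] using hg.signedTail_mul

/-- `ν(φ) - Λ(ν)` for the signed measure `ν = μ₁ - μ₂`. -/
noncomputable def objective (σ2 : ℝ) (φ : ℝ → ℝ) (μ₁ μ₂ : Measure ℝ) : ℝ :=
  ((∫ t, φ t ∂μ₁) - ∫ t, φ t ∂μ₂)
    - (σ2 / 2) * (((∫ p : ℝ × ℝ, min p.1 p.2 ∂(μ₁.prod μ₁))
        - ∫ p : ℝ × ℝ, min p.1 p.2 ∂(μ₁.prod μ₂))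
        - (∫ p : ℝ × ℝ, min p.1 p.2 ∂(μ₂.prod μ₁))
        + ∫ p : ℝ × ℝ, min p.1 p.2 ∂(μ₂.prod μ₂))

theorem mul_sub_half_mul_sq_le {σ : ℝ} (hσ : 0 < σ) (a b : ℝ) :
    b * a - σ / 2 * b ^ 2 ≤ 1 / (2 * σ) * a ^ 2 := by
  have hsq : 1 / (2 * σ) * a ^ 2 - (b * a - σ / 2 * b ^ 2) = (σ * b - a) ^ 2 / (2 * σ) := by
    field_simp
    ring
  have hnonneg : 0 ≤ (σ * b - a) ^ 2 / (2 * σ) := by positivity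
  linarith

section Objective

variable {T σ2 : ℝ} {φ : ℝ → ℝ} {μ₁ μ₂ : Measure ℝ} [IsFiniteMeasure μ₁] [IsFiniteMeasure μ₂]

theorem objective_eq_setIntegral (hφ : ContDiff ℝ 1 φ) (hφ0 : φ 0 = 0)
    (h₁ : μ₁ (Icc 0 T)ᶜ = 0) (h₂ : μ₂ (Icc 0 T)ᶜ = 0) :
    objective σ2 φ μ₁ μ₂ = ∫ u in Icc 0 T,
      (signedTail μ₁ μ₂ u * deriv φ u - σ2 / 2 * signedTail μ₁ μ₂ u ^ 2) := by
  have hd : IntegrableOn (deriv φ) (Icc 0 T) := (hφ.continuous_deriv le_rfl).integrableOn_Icc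
  rw [objective, integral_eq_setIntegral_measureReal_Ici_mul_deriv hφ hφ0 h₁,
    integral_eq_setIntegral_measureReal_Ici_mul_deriv hφ hφ0 h₂,
    integral_min_prod_eq_setIntegral_measureReal_Ici_mul h₁ h₁,
    integral_min_prod_eq_setIntegral_measureReal_Ici_mul h₁ h₂,
    integral_min_prod_eq_setIntegral_measureReal_Ici_mul h₂ h₁,
    integral_min_prod_eq_setIntegral_measureReal_Ici_mul h₂ h₂,
    integral_sub hd.signedTail_mul ((integrableOn_signedTail_sq μ₁ μ₂ 0 T).const_mul _),
    integral_const_mul]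
  congr 2
  · rw [← integral_sub hd.measureReal_Ici_mul hd.measureReal_Ici_mul]
    simp only [signedTail, sub_mul]
  · have hGG : ∀ (μ ν : Measure ℝ) [IsFiniteMeasure μ] [IsFiniteMeasure ν],
        IntegrableOn (fun u => μ.real (Ici u) * ν.real (Ici u)) (Icc 0 T) :=
      fun μ ν _ _ => (integrableOn_measureReal_Ici_Icc ν 0 T).measureReal_Ici_mul
    have h₁₁₂ : IntegrableOn (fun u => μ₁.real (Ici u) * μ₁.real (Ici u)
        - μ₁.real (Ici u) * μ₂.real (Ici u)) (Icc 0 T) := (hGG μ₁ μ₁).sub (hGG μ₁ μ₂)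
    have h₂₁₂ : IntegrableOn (fun u => μ₂.real (Ici u) * μ₁.real (Ici u)
        - μ₂.real (Ici u) * μ₂.real (Ici u)) (Icc 0 T) := (hGG μ₂ μ₁).sub (hGG μ₂ μ₂)
    rw [sub_add, ← integral_sub (hGG μ₁ μ₁) (hGG μ₁ μ₂), ← integral_sub (hGG μ₂ μ₁) (hGG μ₂ μ₂),
      ← integral_sub h₁₁₂ h₂₁₂]
    congr 1 with u
    simp only [signedTail]
    ring

theorem objective_le (hT : 0 ≤ T) (hσ : 0 < σ2) (hφ : ContDiff ℝ 1 φ) (hφ0 : φ 0 = 0)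
    (h₁ : μ₁ (Icc 0 T)ᶜ = 0) (h₂ : μ₂ (Icc 0 T)ᶜ = 0) :
    objective σ2 φ μ₁ μ₂ ≤ 1 / (2 * σ2) * ∫ t in (0 : ℝ)..T, deriv φ t ^ 2 := by
  have hd : Continuous (deriv φ) := hφ.continuous_deriv le_rfl
  rw [objective_eq_setIntegral hφ hφ0 h₁ h₂, intervalIntegral.integral_of_le hT,
    ← integral_Icc_eq_integral_Ioc, ← integral_const_mul]
  refine setIntegral_mono_on ?_ ((hd.pow 2).integrableOn_Icc.const_mul _) measurableSet_Icc
    fun u _ => mul_sub_half_mul_sq_le hσ _ _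
  exact hd.integrableOn_Icc.signedTail_mul.sub ((integrableOn_signedTail_sq μ₁ μ₂ 0 T).const_mul _)

theorem objective_eq_of_signedTail_eq (hT : 0 ≤ T) (hσ : σ2 ≠ 0) (hφ : ContDiff ℝ 1 φ)
    (hφ0 : φ 0 = 0) (h₁ : μ₁ (Icc 0 T)ᶜ = 0) (h₂ : μ₂ (Icc 0 T)ᶜ = 0)
    (hg : ∀ u ∈ Icc 0 T, signedTail μ₁ μ₂ u = deriv φ u / σ2) :
    objective σ2 φ μ₁ μ₂ = 1 / (2 * σ2) * ∫ t in (0 : ℝ)..T, deriv φ t ^ 2 := by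
  rw [objective_eq_setIntegral hφ hφ0 h₁ h₂, intervalIntegral.integral_of_le hT,
    ← integral_Icc_eq_integral_Ioc, ← integral_const_mul]
  refine setIntegral_congr_fun measurableSet_Icc fun u hu => ?_
  rw [hg u hu]
  field_simp
  ring

end Objective

/-- `ENNReal.ofReal` truncates at `0`, so this is the positive part `f⁺(t) dt + c⁺ δ_T` of the
signed measure `f(t) dt + c δ_T` on `[0, T]`. -/
noncomputable def densityAddAtom (T : ℝ) (f : ℝ → ℝ) (c : ℝ) : Measure ℝ :=
  (volume.restrict (Icc 0 T)).withDensity (fun t => ENNReal.ofReal (f t))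
    + ENNReal.ofReal c • Measure.dirac T

section DensityAddAtom

variable {T : ℝ} {f : ℝ → ℝ} {c : ℝ}

theorem isFiniteMeasure_densityAddAtom (hf : IntegrableOn f (Icc 0 T)) :
    IsFiniteMeasure (densityAddAtom T f c) := by
  have := isFiniteMeasure_withDensity_ofReal hf.2
  constructor
  rw [densityAddAtom, Measure.add_apply]
  exact ENNReal.add_lt_top.2 ⟨measure_lt_top _ _, by simp⟩

theorem densityAddAtom_compl_Icc (hT : 0 ≤ T) : densityAddAtom T f c (Icc 0 T)ᶜ = 0 := by
  simp [densityAddAtom, withDensity_apply, measurableSet_Icc.compl, hT]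

theorem measureReal_densityAddAtom_Ici (hf : IntegrableOn f (Icc 0 T)) {u : ℝ} (hu : u ∈ Icc 0 T) :
    (densityAddAtom T f c).real (Ici u)
      = (∫⁻ t in Icc u T, ENNReal.ofReal (f t)).toReal + max c 0 := by
  have := isFiniteMeasure_withDensity_ofReal hf.2
  have hsection : Ici u ∩ Icc 0 T = Icc u T := by
    ext t
    simp only [mem_inter_iff, mem_Ici, mem_Icc]
    constructor
    · rintro ⟨hut, -, htT⟩; exact ⟨hut, htT⟩
    · rintro ⟨hut, htT⟩; exact ⟨hut, hu.1.trans hut, htT⟩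
  have hatom : (ENNReal.ofReal c • Measure.dirac T) (Ici u) ≠ ⊤ :=
    ENNReal.mul_ne_top ENNReal.ofReal_ne_top (measure_ne_top _ _)
  rw [densityAddAtom, measureReal_add_apply (h₂ := hatom), measureReal_def,
    withDensity_apply _ measurableSet_Ici, Measure.restrict_restrict measurableSet_Ici, hsection,
    measureReal_def, Measure.smul_apply,
    Measure.dirac_apply' _ measurableSet_Ici, indicator_of_mem (mem_Ici.2 hu.2), Pi.one_apply,
    smul_eq_mul, mul_one, ENNReal.toReal_ofReal']

theorem signedTail_densityAddAtom (hf : IntegrableOn f (Icc 0 T)) {u : ℝ} (hu : u ∈ Icc 0 T) :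
    signedTail (densityAddAtom T f c) (densityAddAtom T (fun t => -f t) (-c)) u
      = (∫ t in Icc u T, f t) + c := by
  rw [signedTail, measureReal_densityAddAtom_Ici hf hu,
    measureReal_densityAddAtom_Ici (f := fun t => -f t) hf.neg hu,
    integral_eq_lintegral_pos_part_sub_lintegral_neg_part (hf.mono_set (Icc_subset_Icc_left hu.1))]
  linarith [max_zero_sub_max_neg_zero_eq_self c]

end DensityAddAtom

theorem signedTail_densityAddAtom_deriv {T σ2 u : ℝ} {φ : ℝ → ℝ} (hφ : ContDiff ℝ 2 φ)
    (hu : u ∈ Icc 0 T) :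
    signedTail (densityAddAtom T (fun t => -deriv (deriv φ) t / σ2) (deriv φ T / σ2))
      (densityAddAtom T (fun t => deriv (deriv φ) t / σ2) (-deriv φ T / σ2)) u
      = deriv φ u / σ2 := by
  have hφ' : ContDiff ℝ 1 (deriv φ) := hφ.deriv' (n := 1)
  have hφ'' : Continuous (deriv (deriv φ)) := hφ'.continuous_deriv le_rfl
  have h := signedTail_densityAddAtom (f := fun t => -deriv (deriv φ) t / σ2)
    (c := deriv φ T / σ2) (hφ''.neg.div_const σ2).integrableOn_Icc hu
  simp only [neg_div, neg_neg] at h ⊢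
  rw [h, integral_neg, integral_div, integral_Icc_eq_integral_Ioc,
    ← intervalIntegral.integral_of_le hu.2, intervalIntegral.integral_deriv_eq_sub' _ rfl
      (fun x _ => (hφ'.differentiable one_ne_zero).differentiableAt) hφ''.continuousOn]
  ring

/-- Fenchel–Legendre transform of `Λ(ν) = (σ²/2) ∫∫ min(s,t) ν(ds)ν(dt)` over signed
measures `ν` on `[0,T]` (represented as differences `μ₁ - μ₂` of finite measures
supported on `[0,T]`): for `φ ∈ C²` with `φ(0) = 0`,
`Λ*(φ) = sup_ν { ν(φ) - Λ(ν) } = (1/(2σ²)) ∫₀ᵀ |φ'|²`, and the supremum is attained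
at `ν(dt) = -(φ''(t)/σ²) dt + (φ'(T)/σ²) δ_T(dt)`. -/
theorem fenchel_legendre_brownian_type (T σ2 : ℝ) (hT : 0 < T) (hσ : 0 < σ2)
    (φ : ℝ → ℝ) (hφ : ContDiff ℝ 2 φ) (hφ0 : φ 0 = 0) :
    IsGreatest
      {x : ℝ | ∃ μ₁ μ₂ : Measure ℝ, IsFiniteMeasure μ₁ ∧ IsFiniteMeasure μ₂ ∧
        μ₁ (Set.Icc 0 T)ᶜ = 0 ∧ μ₂ (Set.Icc 0 T)ᶜ = 0 ∧
        x = ((∫ t, φ t ∂μ₁) - ∫ t, φ t ∂μ₂)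
          - (σ2 / 2) * (((∫ p : ℝ × ℝ, min p.1 p.2 ∂(μ₁.prod μ₁))
              - ∫ p : ℝ × ℝ, min p.1 p.2 ∂(μ₁.prod μ₂))
              - (∫ p : ℝ × ℝ, min p.1 p.2 ∂(μ₂.prod μ₁))
              + ∫ p : ℝ × ℝ, min p.1 p.2 ∂(μ₂.prod μ₂))}
      ((1 / (2 * σ2)) * ∫ t in (0 : ℝ)..T, (deriv φ t) ^ 2) ∧
    (∃ μ₁ μ₂ : Measure ℝ,
      μ₁ = (volume.restrict (Set.Icc 0 T)).withDensity
            (fun t => ENNReal.ofReal (-(deriv (deriv φ) t) / σ2))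
          + (ENNReal.ofReal (deriv φ T / σ2)) • Measure.dirac T ∧
      μ₂ = (volume.restrict (Set.Icc 0 T)).withDensity
            (fun t => ENNReal.ofReal ((deriv (deriv φ) t) / σ2))
          + (ENNReal.ofReal (-(deriv φ T) / σ2)) • Measure.dirac T ∧
      ((∫ t, φ t ∂μ₁) - ∫ t, φ t ∂μ₂)
          - (σ2 / 2) * (((∫ p : ℝ × ℝ, min p.1 p.2 ∂(μ₁.prod μ₁))
              - ∫ p : ℝ × ℝ, min p.1 p.2 ∂(μ₁.prod μ₂))
              - (∫ p : ℝ × ℝ, min p.1 p.2 ∂(μ₂.prod μ₁))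
              + ∫ p : ℝ × ℝ, min p.1 p.2 ∂(μ₂.prod μ₂))
        = (1 / (2 * σ2)) * ∫ t in (0 : ℝ)..T, (deriv φ t) ^ 2) := by
  have hφ1 : ContDiff ℝ 1 φ := hφ.of_le one_le_two
  have hφ'' : Continuous (deriv (deriv φ)) := (hφ.deriv' (n := 1)).continuous_deriv le_rfl
  let μ₁ := densityAddAtom T (fun t => -deriv (deriv φ) t / σ2) (deriv φ T / σ2)
  let μ₂ := densityAddAtom T (fun t => deriv (deriv φ) t / σ2) (-deriv φ T / σ2)
  have hfin₁ : IsFiniteMeasure μ₁ :=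
    isFiniteMeasure_densityAddAtom (hφ''.neg.div_const σ2).integrableOn_Icc
  have hfin₂ : IsFiniteMeasure μ₂ :=
    isFiniteMeasure_densityAddAtom (hφ''.div_const σ2).integrableOn_Icc
  have h₁ : μ₁ (Icc 0 T)ᶜ = 0 := densityAddAtom_compl_Icc hT.le
  have h₂ : μ₂ (Icc 0 T)ᶜ = 0 := densityAddAtom_compl_Icc hT.le
  have hopt := objective_eq_of_signedTail_eq hT.le hσ.ne' hφ1 hφ0 h₁ h₂
    fun u hu => signedTail_densityAddAtom_deriv hφ hu
  refine ⟨⟨⟨μ₁, μ₂, hfin₁, hfin₂, h₁, h₂, hopt.symm⟩, ?_⟩, μ₁, μ₂, rfl, rfl, hopt⟩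
  rintro x ⟨ν₁, ν₂, _, _, hν₁, hν₂, rfl⟩
  exact objective_le hT.le hσ hφ1 hφ0 hν₁ hν₂
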